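/- If X is an asymptotically transitive Banach space, then the function η̂(y) = inf{‖I − f⊗y‖ : f ∈ X*, f(y) = 1} is constant on the unit sphere of X. -/

import Mathlib

/-- `η̂(y) = inf{‖I − f⊗y‖ : f ∈ X*, f(y) = 1}`. -/
noncomputable def etaHat {X : Type*} [NormedAddCommGroup X] [NormedSpace ℝ X] (y : X) : ℝ :=
  sInf {r : ℝ | ∃ f : X →L[ℝ] ℝ, f y = 1 ∧
    ‖ContinuousLinearMap.id ℝ X - f.smulRight y‖ = r}

lemma etaHat_set_bddBelow {X : Type*} [NormedAddCommGroup X] [NormedSpace ℝ X] (y : X) :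
    BddBelow {r : ℝ | ∃ f : X →L[ℝ] ℝ, f y = 1 ∧
      ‖ContinuousLinearMap.id ℝ X - f.smulRight y‖ = r} := by
  refine ⟨0, fun r hr => ?_⟩
  obtain ⟨f, _, hf⟩ := hr
  rw [← hf]; exact norm_nonneg _

lemma etaHat_set_nonempty {X : Type*} [NormedAddCommGroup X] [NormedSpace ℝ X]
    [CompleteSpace X] (y : X) (hy : ‖y‖ = 1) :
    ({r : ℝ | ∃ f : X →L[ℝ] ℝ, f y = 1 ∧
      ‖ContinuousLinearMap.id ℝ X - f.smulRight y‖ = r}).Nonempty := by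
  have hy0 : y ≠ 0 := by intro h; rw [h, norm_zero] at hy; norm_num at hy
  obtain ⟨g, _, hg⟩ := exists_dual_vector ℝ y (norm_ne_zero_iff.mpr hy0)
  refine ⟨_, g, ?_, rfl⟩
  simpa [hy] using hg

lemma etaHat_nonneg {X : Type*} [NormedAddCommGroup X] [NormedSpace ℝ X]
    [CompleteSpace X] (y : X) (hy : ‖y‖ = 1) : 0 ≤ etaHat y := by
  refine le_csInf (etaHat_set_nonempty y hy) ?_
  rintro r ⟨f, _, hf⟩
  rw [← hf]; exact norm_nonneg _

lemma etaHat_le {X : Type*} [NormedAddCommGroup X] [NormedSpace ℝ X] [CompleteSpace X]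
    (hAT : ∀ x y : X, ‖x‖ = 1 → ‖y‖ = 1 → ∀ ε > 0, ∃ T : X ≃L[ℝ] X,
      T x = y ∧ ‖(T : X →L[ℝ] X)‖ ≤ 1 + ε ∧ ‖(T.symm : X →L[ℝ] X)‖ ≤ 1 + ε)
    (x y : X) (hx : ‖x‖ = 1) (hy : ‖y‖ = 1) : etaHat y ≤ etaHat x := by
  refine le_of_forall_gt_imp_ge_of_dense fun b hb => ?_
  -- pick r in the set for x with r < b
  obtain ⟨r, hrmem, hrb⟩ :=
    (csInf_lt_iff (etaHat_set_bddBelow x) (etaHat_set_nonempty x hx)).1 hb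
  obtain ⟨f, hfx, hfr⟩ := hrmem
  have hr0 : 0 ≤ r := by rw [← hfr]; exact norm_nonneg _
  -- choose ε > 0 with (1+ε)^2 * r ≤ b
  have hbpos : 0 < b := lt_of_le_of_lt hr0 hrb
  obtain ⟨ε, hε, hεb⟩ : ∃ ε : ℝ, 0 < ε ∧ (1 + ε) * (r * (1 + ε)) ≤ b := by
    rcases eq_or_lt_of_le hr0 with h0 | h0
    · exact ⟨1, one_pos, by nlinarith⟩
    · refine ⟨min 1 ((b - r) / (3 * r)), ?_, ?_⟩
      · exact lt_min one_pos (div_pos (by linarith) (by positivity))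
      · have h1 : min 1 ((b - r) / (3 * r)) ≤ 1 := min_le_left _ _
        have h2 : min 1 ((b - r) / (3 * r)) ≤ (b - r) / (3 * r) := min_le_right _ _
        have h2' : min 1 ((b - r) / (3 * r)) * (3 * r) ≤ b - r :=
          (le_div_iff₀ (by positivity)).1 h2
        have h0' : 0 ≤ min 1 ((b - r) / (3 * r)) :=
          le_min zero_le_one (le_of_lt (div_pos (by linarith) (by positivity)))
        nlinarith
  obtain ⟨T, hTx, hT, hTinv⟩ := hAT x y hx hy ε hε
  -- g = f ∘ T⁻¹
  set g : X →L[ℝ] ℝ := f.comp (T.symm : X →L[ℝ] X) with hg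
  have hgy : g y = 1 := by
    have : T.symm y = x := by rw [← hTx]; exact T.symm_apply_apply x
    simp [hg, this, hfx]
  -- conjugation identity
  have hconj : ContinuousLinearMap.id ℝ X - g.smulRight y =
      (T : X →L[ℝ] X).comp
        ((ContinuousLinearMap.id ℝ X - f.smulRight x).comp (T.symm : X →L[ℝ] X)) := by
    ext z
    simp only [ContinuousLinearMap.sub_apply, ContinuousLinearMap.id_apply,
      ContinuousLinearMap.smulRight_apply, ContinuousLinearMap.comp_apply,
      ContinuousLinearMap.coe_coe, map_sub, map_smul]
    simp [hg, hTx]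
  refine csInf_le_of_le (etaHat_set_bddBelow y) ⟨g, hgy, rfl⟩ ?_
  calc ‖ContinuousLinearMap.id ℝ X - g.smulRight y‖
      ≤ ‖(T : X →L[ℝ] X)‖ * (‖ContinuousLinearMap.id ℝ X - f.smulRight x‖ *
        ‖(T.symm : X →L[ℝ] X)‖) := by
        rw [hconj]
        exact le_trans (ContinuousLinearMap.opNorm_comp_le _ _)
          (mul_le_mul_of_nonneg_left (ContinuousLinearMap.opNorm_comp_le _ _) (norm_nonneg _))
    _ ≤ (1 + ε) * (r * (1 + ε)) := by
        rw [hfr]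
        have h1 : 0 < 1 + ε := by linarith
        gcongr
    _ ≤ b := hεb

theorem stmt_7 {X : Type*} [NormedAddCommGroup X] [NormedSpace ℝ X] [CompleteSpace X]
    (hAT : ∀ x y : X, ‖x‖ = 1 → ‖y‖ = 1 → ∀ ε > 0, ∃ T : X ≃L[ℝ] X,
      T x = y ∧ ‖(T : X →L[ℝ] X)‖ ≤ 1 + ε ∧ ‖(T.symm : X →L[ℝ] X)‖ ≤ 1 + ε) :
    ∀ x y : X, ‖x‖ = 1 → ‖y‖ = 1 → etaHat x = etaHat y := by
  intro x y hx hy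
  exact le_antisymm (etaHat_le hAT y x hy hx) (etaHat_le hAT x y hx hy)
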